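/- arXiv:2410.15000 — 3 statements merged into one kernel-verified Lean document; each statement's English description precedes it below -/
import Mathlib

section
/- Let G be a finite simple connected C-canonical graph of order n and diameter d with d ≡ 0 (mod 3) and m_G(−1) = n − d − 1, and let P = v_1 v_2 ⋯ v_{d+1} be a diameter path of G. Suppose x is a vertex not on P whose unique neighbor on P is v_i, and u is a vertex not on P adjacent to exactly v_j and v_{j+1} on P, and x is not adjacent to u. If j > i then j ≡ 0 (mod 3), and if j < i then j ≡ 1 (mod 3). -/
/-
Since `m_G(-1) = n - d - 1`, the matrix `A + I` has rank `d + 1`, so some nonzero `f` in its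
kernel is supported on the `d + 2` vertices `v₁, …, v_{d+1}, x`. Row `v_m` of `(A + I) f = 0`
says `f(v_{m-1}) + f(v_m) + f(v_{m+1}) = 0` for `m ≠ i`, so on each side of `i` the values of `f`
along the path are a multiple of `0, 1, -1, 0, 1, -1, …` started from the nearer end. Row `x`
gives `f(x) = -f(v_i)`; if `f(v_i) = 0` the recurrence would hold along the whole path, which
forces `f = 0` because `d + 2 ≢ 0 (mod 3)`. Hence `f(v_i) ≠ 0`, and row `u`,
`f(v_j) + f(v_{j+1}) = 0`, pins down `j mod 3` on either side of `i`.
-/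

attribute [local instance] Classical.propDecidable

/-- The multiplicity of `-1` as an eigenvalue of the adjacency matrix of `G`,
i.e. the dimension over `ℝ` of the kernel of `A + I`. -/
noncomputable def multNegOne {V : Type*} [Fintype V] (G : SimpleGraph V) : ℕ :=
  Module.finrank ℝ (LinearMap.ker (Matrix.toLin' (G.adjMatrix ℝ + 1)))

/-- The set of indices `i ∈ {1, …, d+1}` such that `x` is adjacent to the vertex `v i`
of the diameter path `v 1, v 2, …, v (d+1)`. -/
noncomputable def pathNbrs {V : Type*} (G : SimpleGraph V) (d : ℕ) (v : ℕ → V) (x : V) :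
    Finset ℕ :=
  (Finset.Icc 1 (d + 1)).filter fun i => G.Adj x (v i)

open Finset Module Matrix

def nullSeq (r : ℕ) : ℝ := if r % 3 = 0 then 0 else if r % 3 = 1 then 1 else -1

lemma nullSeq_sum_three_eq_zero (k : ℕ) : nullSeq k + nullSeq (k + 1) + nullSeq (k + 2) = 0 := by
  unfold nullSeq; split_ifs <;> (try norm_num) <;> omega

lemma nullSeq_eq_zero_iff {r : ℕ} : nullSeq r = 0 ↔ r % 3 = 0 := by
  unfold nullSeq; split_ifs <;> simp_all

lemma nullSeq_add_nullSeq_succ_eq_zero_iff {r : ℕ} :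
    nullSeq r + nullSeq (r + 1) = 0 ↔ r % 3 = 1 := by
  have h : nullSeq r + nullSeq (r + 1) = -nullSeq (r + 2) := by
    linarith [nullSeq_sum_three_eq_zero r]
  rw [h, neg_eq_zero, nullSeq_eq_zero_iff]
  omega

lemma eq_mul_nullSeq {μ : ℕ → ℝ} {N : ℕ} (h0 : μ 0 = 0)
    (hrec : ∀ k, k + 2 ≤ N → μ k + μ (k + 1) + μ (k + 2) = 0) :
    ∀ m ≤ N, μ m = μ 1 * nullSeq m
  | 0, _ => by simp [h0, nullSeq]
  | 1, _ => by simp [nullSeq]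
  | k + 2, hk => by
    have hk0 := eq_mul_nullSeq h0 hrec k (by omega)
    have hk1 := eq_mul_nullSeq h0 hrec (k + 1) (by omega)
    linear_combination hrec k hk - hk0 - hk1 - μ 1 * nullSeq_sum_three_eq_zero k

lemma eq_mul_nullSeq_sub {μ : ℕ → ℝ} {a N : ℕ} (hN : μ (N + 1) = 0)
    (hrec : ∀ k, a ≤ k → k + 1 ≤ N → μ k + μ (k + 1) + μ (k + 2) = 0) :
    ∀ m, a ≤ m → m ≤ N + 1 → μ m = μ N * nullSeq (N + 1 - m) := by
  intro m ham hmN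
  have := eq_mul_nullSeq (μ := fun r => μ (N + 1 - r)) (N := N + 1 - a) (by simpa using hN)
    (fun k hk => by
      have := hrec (N - 1 - k) (by omega) (by omega)
      rw [show N - 1 - k + 1 = N - k by omega, show N - 1 - k + 2 = N + 1 - k by omega] at this
      simp only [show N + 1 - (k + 1) = N - k by omega, show N + 1 - (k + 2) = N - 1 - k by omega]
      linarith) (N + 1 - m) (by omega)
  simpa [show N + 1 - (N + 1 - m) = m by omega] using this

lemma eq_zero_of_sum_three_eq_zero {μ : ℕ → ℝ} {N : ℕ} (h0 : μ 0 = 0) (hN : μ N = 0)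
    (hN3 : N % 3 ≠ 0) (hrec : ∀ k, k + 2 ≤ N → μ k + μ (k + 1) + μ (k + 2) = 0) :
    ∀ m ≤ N, μ m = 0 := by
  have hform := eq_mul_nullSeq h0 hrec
  have h1 : μ 1 = 0 := by
    have := hform N le_rfl
    rw [hN, eq_comm, mul_eq_zero] at this
    exact this.resolve_right (nullSeq_eq_zero_iff.not.mpr hN3)
  intro m hm
  rw [hform m hm, h1, zero_mul]

section Rows

/- `μ` stands for the values `f(v_m)` of a kernel vector along the path, padded by `μ 0 = 0` and
`μ (d + 2) = 0`, and `c` for `f(x)`; `hrow` is row `v_m` of `(A + I) f = 0`. -/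

variable {μ : ℕ → ℝ} {c : ℝ} {d i : ℕ}

lemma sum_three_eq_zero_of_rows
    (hrow : ∀ m ∈ Icc 1 (d + 1), μ (m - 1) + μ m + μ (m + 1) + (if m = i then c else 0) = 0)
    {k : ℕ} (hk : k ≤ d) (hki : k + 1 ≠ i) : μ k + μ (k + 1) + μ (k + 2) = 0 := by
  simpa [hki] using hrow (k + 1) (by simp; omega)

lemma ne_zero_of_rows (h0 : μ 0 = 0) (htop : μ (d + 2) = 0) (hd : d % 3 = 0)
    (hrow : ∀ m ∈ Icc 1 (d + 1), μ (m - 1) + μ m + μ (m + 1) + (if m = i then c else 0) = 0)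
    (hx : μ i + c = 0) (hne : c ≠ 0 ∨ ∃ m ∈ Icc 1 (d + 1), μ m ≠ 0) : μ i ≠ 0 := by
  intro hμi
  have hc : c = 0 := by linarith
  have hrec : ∀ k, k + 2 ≤ d + 2 → μ k + μ (k + 1) + μ (k + 2) = 0 := fun k hk => by
    simpa [hc] using hrow (k + 1) (by simp; omega)
  have hzero := eq_zero_of_sum_three_eq_zero h0 htop (by omega) hrec
  obtain hc' | ⟨m, hm, hμm⟩ := hne
  · exact hc' hc
  · exact hμm (hzero m (by simp at hm; omega))

theorem mod_three_of_rows {j : ℕ} (hd : d % 3 = 0) (hi : i ∈ Icc 1 (d + 1)) (hj : j ∈ Icc 1 d)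
    (h0 : μ 0 = 0) (htop : μ (d + 2) = 0)
    (hrow : ∀ m ∈ Icc 1 (d + 1), μ (m - 1) + μ m + μ (m + 1) + (if m = i then c else 0) = 0)
    (hx : μ i + c = 0) (hu : μ j + μ (j + 1) = 0)
    (hne : c ≠ 0 ∨ ∃ m ∈ Icc 1 (d + 1), μ m ≠ 0) :
    (i < j → j % 3 = 0) ∧ (j < i → j % 3 = 1) := by
  simp only [mem_Icc] at hi hj
  have hμi := ne_zero_of_rows h0 htop hd hrow hx hne
  have hleft := eq_mul_nullSeq (N := i) h0
    fun k hk => sum_three_eq_zero_of_rows hrow (by omega) (by omega)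
  have hright := eq_mul_nullSeq_sub (a := i) (N := d + 1) htop
    fun k hk hkd => sum_three_eq_zero_of_rows hrow (by omega) (by omega)
  constructor
  · intro hij
    have hμd : μ (d + 1) ≠ 0 := by rintro h; simp [hright i le_rfl (by omega), h] at hμi
    have e1 : d + 1 + 1 - j = d + 1 - j + 1 := by omega
    have e2 : d + 1 + 1 - (j + 1) = d + 1 - j := by omega
    rw [hright j (by omega) (by omega), hright (j + 1) (by omega) (by omega), ← mul_add,
      mul_eq_zero, or_iff_right hμd, e1, e2, add_comm,
      nullSeq_add_nullSeq_succ_eq_zero_iff] at hu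
    omega
  · intro hji
    have hμ1 : μ 1 ≠ 0 := by rintro h; simp [hleft i le_rfl, h] at hμi
    rw [hleft j (by omega), hleft (j + 1) (by omega), ← mul_add, mul_eq_zero, or_iff_right hμ1,
      nullSeq_add_nullSeq_succ_eq_zero_iff] at hu
    exact hu

end Rows

theorem Matrix.exists_mulVec_eq_zero_of_support_subset {V : Type*} [Fintype V]
    (M : Matrix V V ℝ) (s : Finset V)
    (h : Fintype.card V < finrank ℝ (LinearMap.ker (Matrix.toLin' M)) + #s) :
    ∃ f : V → ℝ, f ≠ 0 ∧ M *ᵥ f = 0 ∧ ∀ a ∉ s, f a = 0 := by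
  set E := Function.ExtendByZero.linearMap ℝ ((↑) : s → V)
  have hE : Function.Injective E := Function.extend_injective Subtype.val_injective (0 : V → ℝ)
  have hrank := (Matrix.toLin' M).finrank_range_add_finrank_ker
  have hcomp := (Matrix.toLin' M ∘ₗ E).finrank_range_add_finrank_ker
  have hle := Submodule.finrank_mono (LinearMap.range_comp_le_range E (Matrix.toLin' M))
  simp only [finrank_fintype_fun_eq_card, Fintype.card_coe] at hrank hcomp
  have hker : 1 ≤ finrank ℝ (LinearMap.ker (toLin' M ∘ₗ E)) := by lia
  obtain ⟨g, hg, hg0⟩ := Submodule.exists_mem_ne_zero_of_ne_bot (Submodule.one_le_finrank_iff.mp hker)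
  refine ⟨E g, fun h0 => hg0 (hE (h0.trans E.map_zero.symm)), hg, fun a ha => ?_⟩
  exact Function.extend_apply' _ _ _ fun ⟨b, hb⟩ => ha (hb ▸ b.2)

section DiameterPath

variable {V : Type*} {G : SimpleGraph V} {d : ℕ} {v : ℕ → V} {f : V → ℝ} {x : V}

def IsGeodesicPath (G : SimpleGraph V) (d : ℕ) (v : ℕ → V) : Prop :=
  ∀ i ∈ Icc 1 (d + 1), ∀ j ∈ Icc 1 (d + 1), G.dist (v i) (v j) = max i j - min i j

lemma SimpleGraph.adjMatrix_add_one_apply (G : SimpleGraph V) (a b : V) :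
    (G.adjMatrix ℝ + 1) a b = if a = b ∨ G.Adj a b then 1 else 0 := by
  by_cases hab : a = b
  · subst hab; simp
  · simp [hab, Matrix.one_apply_ne hab, SimpleGraph.adjMatrix_apply]

lemma IsGeodesicPath.injOn (hpath : IsGeodesicPath G d v) : Set.InjOn v (Icc 1 (d + 1)) :=
  fun k hk l hl hkl => by
  have := hpath k hk l hl
  rw [hkl, SimpleGraph.dist_self] at this
  omega

lemma IsGeodesicPath.adjMatrix_add_one_apply (hpath : IsGeodesicPath G d v) {m l : ℕ}
    (hm : m ∈ Icc 1 (d + 1)) (hl : l ∈ Icc 1 (d + 1)) :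
    (G.adjMatrix ℝ + 1) (v m) (v l) =
      if l ∈ ({m - 1, m, m + 1} : Finset ℕ) then 1 else 0 := by
  have hdist := hpath m hm l hl
  rw [G.adjMatrix_add_one_apply]
  refine if_congr ?_ rfl rfl
  simp only [mem_insert, mem_singleton, ← SimpleGraph.dist_eq_one_iff_adj, hdist]
  refine ⟨fun h => ?_, fun h => ?_⟩
  · rcases h with h | h
    · have := hpath.injOn hm hl h
      omega
    · rw [mem_Icc] at hm; omega
  · by_cases hml : m = l
    · exact Or.inl (congrArg v hml)
    · right; rw [mem_Icc] at hm; omega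

lemma adjMatrix_add_one_apply_of_notMem_path {a : V} (ha : ∀ l ∈ Icc 1 (d + 1), a ≠ v l)
    {l : ℕ} (hl : l ∈ Icc 1 (d + 1)) :
    (G.adjMatrix ℝ + 1) a (v l) = if l ∈ pathNbrs G d v a then 1 else 0 := by
  simp [G.adjMatrix_add_one_apply, pathNbrs, hl, ha l hl]

def pathSeq (f : V → ℝ) (d : ℕ) (v : ℕ → V) (l : ℕ) : ℝ :=
  if l ∈ Icc 1 (d + 1) then f (v l) else 0

lemma ne_zero_or_exists_pathSeq_ne_zero
    (hf : ∀ b ∉ insert x ((Icc 1 (d + 1)).image v), f b = 0) (hf0 : f ≠ 0) :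
    f x ≠ 0 ∨ ∃ m ∈ Icc 1 (d + 1), pathSeq f d v m ≠ 0 := by
  obtain ⟨b, hb⟩ := Function.ne_iff.mp hf0
  rcases mem_insert.mp (not_imp_comm.mp (hf b) hb) with rfl | hbP
  · exact Or.inl hb
  · obtain ⟨m, hm, rfl⟩ := mem_image.mp hbP
    exact Or.inr ⟨m, hm, by rwa [pathSeq, if_pos hm]⟩

lemma sum_pathSeq_add_mul_eq_zero [Fintype V] {M : Matrix V V ℝ}
    (hinj : Set.InjOn v (Icc 1 (d + 1))) (hx : ∀ l ∈ Icc 1 (d + 1), x ≠ v l)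
    (hf : ∀ b ∉ insert x ((Icc 1 (d + 1)).image v), f b = 0) (hMf : M *ᵥ f = 0) {a : V}
    {T : Finset ℕ} (hT : ∀ l ∈ Icc 1 (d + 1), M a (v l) = if l ∈ T then 1 else 0) :
    ∑ l ∈ T, pathSeq f d v l + M a x * f x = 0 := by
  have hxP : x ∉ (Icc 1 (d + 1)).image v := by
    simpa only [mem_image, not_exists, not_and] using fun l hl => (hx l hl).symm
  have hsum : ∑ l ∈ Icc 1 (d + 1), M a (v l) * f (v l) = ∑ l ∈ T, pathSeq f d v l := by
    calc ∑ l ∈ Icc 1 (d + 1), M a (v l) * f (v l)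
        = ∑ l ∈ Icc 1 (d + 1), if l ∈ T then pathSeq f d v l else 0 :=
          sum_congr rfl fun l hl => by rw [hT l hl, pathSeq, if_pos hl, ite_mul, one_mul, zero_mul]
      _ = ∑ l ∈ T, pathSeq f d v l := by
          rw [sum_ite_mem]
          exact sum_subset inter_subset_right fun l hlT hl =>
            if_neg fun h => hl (mem_inter.2 ⟨h, hlT⟩)
  have hrow := congrFun hMf a
  rw [mulVec, dotProduct, ← sum_subset (subset_univ _) fun b _ hb => by rw [hf b hb, mul_zero],
    sum_insert hxP, sum_image hinj, hsum, Pi.zero_apply] at hrow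
  linear_combination hrow

lemma sum_pathNbrs_pathSeq_add_mul_eq_zero [Fintype V]
    (hpath : IsGeodesicPath G d v) (hxP : ∀ l ∈ Icc 1 (d + 1), x ≠ v l)
    (hf : ∀ b ∉ insert x ((Icc 1 (d + 1)).image v), f b = 0)
    (hMf : (G.adjMatrix ℝ + 1) *ᵥ f = 0) {a : V} (ha : ∀ l ∈ Icc 1 (d + 1), a ≠ v l) :
    ∑ l ∈ pathNbrs G d v a, pathSeq f d v l + (G.adjMatrix ℝ + 1) a x * f x = 0 :=
  sum_pathSeq_add_mul_eq_zero hpath.injOn hxP hf hMf fun _ hl =>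
    adjMatrix_add_one_apply_of_notMem_path ha hl

lemma pathSeq_sub_one_add_add_eq_zero [Fintype V]
    (hpath : IsGeodesicPath G d v) (hxP : ∀ l ∈ Icc 1 (d + 1), x ≠ v l)
    (hf : ∀ b ∉ insert x ((Icc 1 (d + 1)).image v), f b = 0)
    (hMf : (G.adjMatrix ℝ + 1) *ᵥ f = 0) {i m : ℕ} (hx : pathNbrs G d v x = {i})
    (hm : m ∈ Icc 1 (d + 1)) :
    pathSeq f d v (m - 1) + pathSeq f d v m + pathSeq f d v (m + 1) +
      (if m = i then f x else 0) = 0 := by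
  have hvx : (G.adjMatrix ℝ + 1) (v m) x = if m = i then 1 else 0 := by
    rw [G.adjMatrix_add_one_apply, eq_comm (a := v m), G.adj_comm, ← G.adjMatrix_add_one_apply,
      adjMatrix_add_one_apply_of_notMem_path hxP hm, hx]
    simp only [mem_singleton]
  have hrow := sum_pathSeq_add_mul_eq_zero hpath.injOn hxP hf hMf fun _ hl =>
    hpath.adjMatrix_add_one_apply hm hl
  have hm1 := (mem_Icc.mp hm).1
  rw [sum_insert (by simp; omega), sum_pair (by omega), hvx, ite_mul, one_mul, zero_mul] at hrow
  linear_combination hrow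

lemma exists_ker_vector_supported_on_path [Fintype V] {n : ℕ}
    (hpath : IsGeodesicPath G d v) (hcard : Fintype.card V = n) (hmult : multNegOne G = n - d - 1)
    (hxP : ∀ l ∈ Icc 1 (d + 1), x ≠ v l) :
    ∃ f : V → ℝ, f ≠ 0 ∧ (G.adjMatrix ℝ + 1) *ᵥ f = 0 ∧
      ∀ b ∉ insert x ((Icc 1 (d + 1)).image v), f b = 0 := by
  have hx : x ∉ (Icc 1 (d + 1)).image v := by
    simpa only [mem_image, not_exists, not_and] using fun l hl => (hxP l hl).symm
  have hP : #((Icc 1 (d + 1)).image v) = d + 1 := by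
    rw [card_image_of_injOn hpath.injOn, Nat.card_Icc, Nat.add_sub_cancel]
  have hn : d + 1 ≤ n := hcard ▸ hP ▸ card_le_univ _
  apply Matrix.exists_mulVec_eq_zero_of_support_subset
  rw [card_insert_of_notMem hx, hP, hcard]
  change n < multNegOne G + _
  omega

end DiameterPath

theorem stmt_14_general {V : Type*} [Fintype V] (G : SimpleGraph V) (n d : ℕ)
    (hcard : Fintype.card V = n)
    (hd3 : d % 3 = 0)
    (v : ℕ → V)
    (hpath : ∀ i ∈ Finset.Icc 1 (d + 1), ∀ j ∈ Finset.Icc 1 (d + 1),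
      G.dist (v i) (v j) = max i j - min i j)
    (hmult : multNegOne G = n - d - 1)
    (x u : V) (hxP : ∀ i ∈ Finset.Icc 1 (d + 1), x ≠ v i) (huP : ∀ i ∈ Finset.Icc 1 (d + 1), u ≠ v i) (i j : ℕ)
    (hx : pathNbrs G d v x = {i})
    (hu : pathNbrs G d v u = {j, j + 1})
    (hnadj : ¬ G.Adj x u) :
    (i < j → j % 3 = 0) ∧ (j < i → j % 3 = 1) := by
  obtain ⟨f, hf0, hMf, hfS⟩ := exists_ker_vector_supported_on_path hpath hcard hmult hxP
  have hi : i ∈ Icc 1 (d + 1) := filter_subset _ _ (hx ▸ mem_singleton_self i)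
  have hj : j ∈ Icc 1 (d + 1) := filter_subset _ _ (hu ▸ mem_insert_self j _)
  have hj' : j + 1 ∈ Icc 1 (d + 1) :=
    filter_subset _ _ (hu ▸ mem_insert_of_mem (mem_singleton_self _))
  have hux : u ≠ x := by
    rintro rfl
    have := congrArg card (hx.symm.trans hu)
    rw [card_singleton, card_pair (by omega)] at this
    omega
  refine mod_three_of_rows (μ := pathSeq f d v) (c := f x) hd3 hi (by simp at hj hj' ⊢; omega)
    (by simp [pathSeq]) (by simp [pathSeq])
    (fun m hm => pathSeq_sub_one_add_add_eq_zero hpath hxP hfS hMf hx hm) ?_ ?_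
    (ne_zero_or_exists_pathSeq_ne_zero hfS hf0)
  · have := sum_pathNbrs_pathSeq_add_mul_eq_zero hpath hxP hfS hMf hxP
    rwa [hx, sum_singleton, G.adjMatrix_add_one_apply, if_pos (Or.inl rfl), one_mul] at this
  · have := sum_pathNbrs_pathSeq_add_mul_eq_zero hpath hxP hfS hMf huP
    rwa [hu, sum_pair (by omega), G.adjMatrix_add_one_apply,
      if_neg (not_or.2 ⟨hux, fun h => hnadj h.symm⟩), zero_mul, add_zero] at this

theorem stmt_14 {V : Type*} [Fintype V] (G : SimpleGraph V) (n d : ℕ)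
    (hconn : G.Connected)
    (hcard : Fintype.card V = n)
    (hcanon : ∀ a b : V, (∀ z : V, (z = a ∨ G.Adj a z) ↔ (z = b ∨ G.Adj b z)) → a = b)
    (hd3 : d % 3 = 0)
    (hdiam : ∀ a b : V, G.dist a b ≤ d)
    (v : ℕ → V)
    (hpath : ∀ i ∈ Finset.Icc 1 (d + 1), ∀ j ∈ Finset.Icc 1 (d + 1),
      G.dist (v i) (v j) = max i j - min i j)
    (hmult : multNegOne G = n - d - 1)
    (x u : V) (hxP : ∀ i ∈ Finset.Icc 1 (d + 1), x ≠ v i) (huP : ∀ i ∈ Finset.Icc 1 (d + 1), u ≠ v i) (i j : ℕ)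
    (hx : pathNbrs G d v x = {i})
    (hu : pathNbrs G d v u = {j, j + 1})
    (hnadj : ¬ G.Adj x u) :
    (i < j → j % 3 = 0) ∧ (j < i → j % 3 = 1) :=
  stmt_14_general G n d hcard hd3 v hpath hmult x u hxP huP i j hx hu hnadj
end

section
/- Let G be a finite simple connected C-canonical graph of order n and diameter d with d ≡ 1 (mod 3) and m_G(−1) = n − d − 1, and let P = v_1 v_2 ⋯ v_{d+1} be a diameter path of G. Then every vertex of G is at distance at most 2 from the vertex set of P. -/
attribute [local instance] Classical.propDecidable

/-! If a vertex `z` were at distance at least 3 from the path, let `z ~ w₂ ~ w₁` be the first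
two steps of a shortest walk from `z` to `v 1`. In `A + I` the rows `z, w₂, v 1, …, v d` and the
columns `z, w₁, v 2, …, v (d + 1)` form a lower triangular `(d + 2) × (d + 2)` submatrix with
ones on the diagonal, so `rank (A + I) ≥ d + 2` and `m_G(-1) = n - rank (A + I) ≤ n - d - 2`. -/

namespace Matrix

theorem card_le_rank_of_isLowerTriangular_submatrix {m n ι R : Type*} [Fintype n]
    [Fintype ι] [LinearOrder ι] [CommRing R] [IsDomain R] (A : Matrix m n R)
    (r : ι → m) (c : ι → n) (htri : (A.submatrix r c).IsLowerTriangular)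
    (hdiag : ∀ i, A (r i) (c i) ≠ 0) : Fintype.card ι ≤ A.rank := by
  classical
  have hdet : (A.submatrix r c).det ≠ 0 := by
    rw [det_of_isLowerTriangular _ htri]
    exact Finset.prod_ne_zero_iff.mpr fun i _ => hdiag i
  calc Fintype.card ι = (A.submatrix r c).rank :=
        (rank_of_det_mem_nonZeroDivisors (mem_nonZeroDivisors_of_ne_zero hdet)).symm
    _ ≤ A.rank := rank_submatrix_le A r c

end Matrix

namespace SimpleGraph

variable {V : Type*} (G : SimpleGraph V)

theorem adjMatrix_add_one_apply_s16 {R : Type*} [NonAssocSemiring R] [DecidableEq V]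
    [DecidableRel G.Adj] (x y : V) :
    (G.adjMatrix R + 1) x y = if x = y ∨ G.Adj x y then 1 else 0 := by
  by_cases hxy : x = y
  · subst hxy; simp
  · by_cases h : G.Adj x y <;> simp [hxy, h]

theorem multNegOne_add_rank [Fintype V] :
    multNegOne G + (G.adjMatrix ℝ + 1).rank = Fintype.card V := by
  rw [multNegOne, Matrix.rank, add_comm, ← Matrix.toLin'_apply',
    LinearMap.finrank_range_add_finrank_ker, Module.finrank_fintype_fun_eq_card]

variable {G}

theorem not_eq_or_adj_of_one_lt_dist {x y : V} (h : 1 < G.dist x y) : ¬(x = y ∨ G.Adj x y) := by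
  rintro (rfl | hxy)
  · simp at h
  · rw [dist_eq_one_iff_adj.mpr hxy] at h
    exact lt_irrefl 1 h

theorem dist_le_two_of_adj_of_eq_or_adj {x y w : V} (hxy : G.Adj x y) (hyw : y = w ∨ G.Adj y w) :
    G.dist x w ≤ 2 := by
  rcases hyw with rfl | hyw
  · exact (dist_le (.cons hxy .nil)).trans (by simp)
  · exact dist_le (.cons hxy (.cons hyw .nil))

theorem exists_adj_adj_not_eq_or_adj_of_two_lt_dist {u w : V} (h : 2 < G.dist u w) :
    ∃ a b, G.Adj u a ∧ G.Adj a b ∧ ¬(u = b ∨ G.Adj u b) := by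
  obtain ⟨p, hp⟩ := exists_walk_of_dist_ne_zero (by omega : G.dist u w ≠ 0)
  match p, hp, h with
  | .nil, _, h => simp at h
  | .cons _ .nil, hp, h => simp at hp; omega
  | .cons (v := a) hua (.cons (v := b) hab q), hp, _ =>
    refine ⟨a, b, hua, hab, ?_⟩
    simp only [Walk.length_cons] at hp
    rintro (rfl | hub)
    · have := dist_le q; omega
    · have := dist_le (.cons hub q); simp only [Walk.length_cons] at this; omega

theorem le_rank_adjMatrix_add_one {R : Type*} [CommRing R] [IsDomain R] [Fintype V]
    [DecidableEq V] [DecidableRel G.Adj] (d : ℕ) (v : ℕ → V) (z w₁ w₂ : V)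
    (hstep : ∀ i, 1 ≤ i → i ≤ d → G.Adj (v i) (v (i + 1)))
    (hfar : ∀ i j, 1 ≤ i → i + 2 ≤ j → j ≤ d + 1 → ¬(v i = v j ∨ G.Adj (v i) (v j)))
    (hw₂w₁ : G.Adj w₂ w₁) (hzw₁ : ¬(z = w₁ ∨ G.Adj z w₁))
    (hz : ∀ i, 2 ≤ i → i ≤ d + 1 → ¬(z = v i ∨ G.Adj z (v i)))
    (hw₂ : ∀ i, 2 ≤ i → i ≤ d + 1 → ¬(w₂ = v i ∨ G.Adj w₂ (v i))) :
    d + 2 ≤ (G.adjMatrix R + 1).rank := by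
  let r : Fin (d + 2) → V := fun i => match i.val with | 0 => z | 1 => w₂ | k + 2 => v (k + 1)
  let c : Fin (d + 2) → V := fun i => match i.val with | 0 => z | 1 => w₁ | k + 2 => v (k + 2)
  have htri : ∀ i j : Fin (d + 2), i < j → ¬(r i = c j ∨ G.Adj (r i) (c j)) := by
    rintro ⟨i, hi⟩ ⟨j, hj⟩ hij
    rw [Fin.mk_lt_mk] at hij
    match i, j, hij with
    | 0, 1, _ => exact hzw₁
    | 0, j + 2, _ => exact hz (j + 2) (by omega) (by omega)
    | 1, j + 2, _ => exact hw₂ (j + 2) (by omega) (by omega)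
    | i + 2, j + 2, _ => exact hfar (i + 1) (j + 2) (by omega) (by omega) (by omega)
  have hdiag : ∀ i : Fin (d + 2), r i = c i ∨ G.Adj (r i) (c i) := by
    rintro ⟨i, hi⟩
    match i with
    | 0 => exact .inl rfl
    | 1 => exact .inr hw₂w₁
    | i + 2 => exact .inr (hstep (i + 1) (by omega) (by omega))
  simpa using Matrix.card_le_rank_of_isLowerTriangular_submatrix _ r c
    (fun i j hij => by
      rw [Matrix.submatrix_apply, adjMatrix_add_one_apply_s16, if_neg (htri i j hij)])
    (fun i => by rw [adjMatrix_add_one_apply_s16, if_pos (hdiag i)]; exact one_ne_zero)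

end SimpleGraph

theorem stmt_16_general {V : Type*} [Fintype V] (G : SimpleGraph V) (n d : ℕ)
    (hcard : Fintype.card V = n)
    (v : ℕ → V)
    (hpath : ∀ i ∈ Finset.Icc 1 (d + 1), ∀ j ∈ Finset.Icc 1 (d + 1),
      G.dist (v i) (v j) = max i j - min i j)
    (hmult : multNegOne G = n - d - 1) :
    ∀ z : V, ∃ i ∈ Finset.Icc 1 (d + 1), G.dist z (v i) ≤ 2 := by
  intro z
  by_contra! hz
  have hdist : ∀ i j, 1 ≤ i → i ≤ j → j ≤ d + 1 → G.dist (v i) (v j) = j - i :=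
    fun i j hi hij hj => by
      rw [hpath i (by simp; omega) j (by simp; omega), max_eq_right hij, min_eq_left hij]
  have hzv : ∀ i, 1 ≤ i → i ≤ d + 1 → 2 < G.dist z (v i) := fun i h1 h2 => hz i (by simp; omega)
  obtain ⟨w₂, w₁, hzw₂, hw₂w₁, hzw₁⟩ :=
    SimpleGraph.exists_adj_adj_not_eq_or_adj_of_two_lt_dist (hzv 1 le_rfl (by omega))
  have hrank := SimpleGraph.le_rank_adjMatrix_add_one (R := ℝ) d v z w₁ w₂
    (fun i h1 h2 => SimpleGraph.dist_eq_one_iff_adj.mp (by rw [hdist i (i + 1)] <;> omega))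
    (fun i j h1 h2 h3 => SimpleGraph.not_eq_or_adj_of_one_lt_dist (by rw [hdist i j] <;> omega))
    hw₂w₁ hzw₁
    (fun i h1 h2 => SimpleGraph.not_eq_or_adj_of_one_lt_dist (by linarith [hzv i (by omega) h2]))
    (fun i h1 h2 hw₂v => by
      linarith [hzv i (by omega) h2, SimpleGraph.dist_le_two_of_adj_of_eq_or_adj hzw₂ hw₂v])
  have := G.multNegOne_add_rank
  omega

theorem stmt_16 {V : Type*} [Fintype V] (G : SimpleGraph V) (n d : ℕ)
    (hconn : G.Connected)
    (hcard : Fintype.card V = n)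
    (hcanon : ∀ a b : V, (∀ z : V, (z = a ∨ G.Adj a z) ↔ (z = b ∨ G.Adj b z)) → a = b)
    (hd3 : d % 3 = 1)
    (hdiam : ∀ a b : V, G.dist a b ≤ d)
    (v : ℕ → V)
    (hpath : ∀ i ∈ Finset.Icc 1 (d + 1), ∀ j ∈ Finset.Icc 1 (d + 1),
      G.dist (v i) (v j) = max i j - min i j)
    (hmult : multNegOne G = n - d - 1) :
    ∀ z : V, ∃ i ∈ Finset.Icc 1 (d + 1), G.dist z (v i) ≤ 2 :=
  stmt_16_general G n d hcard v hpath hmult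
end

section
/- Let G be a finite simple connected C-canonical graph of order n and diameter d with d ≡ 1 (mod 3) and m_G(−1) = n − d − 1, and let P = v_1 v_2 ⋯ v_{d+1} be a diameter path of G. If x and y are distinct vertices not on P, each having exactly one neighbor on P, say x is adjacent to v_{3a} and y is adjacent to v_{3b}, then a ≠ b and x is adjacent to y. Consequently, there are at most two vertices not on P having exactly one neighbor on P. -/
/-!
Put `M = A + I`. Since `m_G(-1) = n - d - 1`, `M` has rank `d + 1`, so any `d + 2` vertices
carry a nonzero vector `f` of `ker M`. Along the diameter path the rows of `M` say that the
weights `u` of `f` satisfy `u (i-1) + u i + u (i+1) = 0` away from the vertices where off-path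
vertices are attached, so they are `3`-periodic there; as `d + 2 ≡ 0 (mod 3)`, the zero boundary
values at both ends of the path pin them down.

For `z` attached only at `v k` with `k ≢ 0 (mod 3)`, a kernel vector on the path and `z` is then
forced to vanish. For `z, z'` attached at `v (3a), v (3b)`, a kernel vector on `z, z'` and
`v 2, …, v (d+1)` vanishes on the path as soon as its weights on `z, z'` do not feed the
recurrence; this forces `z ~ z'`, and for `a = b` it makes `f` a multiple of `e z - e z'`, i.e.
`N[z] = N[z']`, excluded by C-canonicity. Finally `z ~ z'` puts `v (3a)` and `v (3b)` at distance
at most `3`, so `|a - b| ≤ 1`, and no three such vertices have pairwise distinct indices.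
-/

attribute [local instance] Classical.propDecidable

open Finset Matrix

section ThreeTerm

variable {u : ℕ → ℝ} {p q : ℕ}

lemma eq_of_mod_three_eq (h : ∀ i, p ≤ i → i + 2 ≤ q → u i + u (i + 1) + u (i + 2) = 0)
    {i j : ℕ} (hi : p ≤ i) (hij : i ≤ j) (hj : j ≤ q) (hmod : i % 3 = j % 3) :
    u j = u i := by
  obtain ⟨m, rfl⟩ : ∃ m, j = i + 3 * m := ⟨(j - i) / 3, by omega⟩
  clear hij hmod
  induction m with
  | zero => rfl
  | succ m ih =>
    have h₁ := h (i + 3 * m) (by omega) (by omega)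
    have h₂ := h (i + 3 * m + 1) (by omega) (by omega)
    rw [← ih (by omega), show i + 3 * (m + 1) = i + 3 * m + 1 + 2 by ring]
    linarith

lemma eq_zero_of_eq_zero_of_eq_zero
    (h : ∀ i, p ≤ i → i + 2 ≤ q → u i + u (i + 1) + u (i + 2) = 0)
    (h₀ : u p = 0) (h₁ : u (p + 1) = 0) {j : ℕ} (hpj : p ≤ j) (hjq : j ≤ q) :
    u j = 0 := by
  induction j using Nat.strong_induction_on with
  | _ j ih =>
    rcases (show j = p ∨ j = p + 1 ∨ p + 2 ≤ j by omega) with rfl | rfl | hj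
    · exact h₀
    · exact h₁
    · have := h (j - 2) (by omega) (by omega)
      rw [show j - 2 + 1 = j - 1 by omega, show j - 2 + 2 = j by omega,
        ih (j - 2) (by omega) (by omega) (by omega),
        ih (j - 1) (by omega) (by omega) (by omega)] at this
      linarith

/-- The solutions of `u i + u (i+1) + u (i+2) = 0` on `[0, d+2]` vanishing at both ends form the
line spanned by `0, 1, -1, 0, 1, -1, …` (this is where `d ≡ 1 mod 3` enters). -/
lemma eq_zero_of_pendant_source {d k : ℕ} {μ : ℝ} (hd : d % 3 = 1) (hk₁ : 1 ≤ k)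
    (hkd : k ≤ d + 1) (hk : k % 3 ≠ 0) (h₀ : u 0 = 0) (hend : u (d + 2) = 0)
    (hrow : ∀ i ≤ d, u i + u (i + 1) + u (i + 2) + (if i + 1 = k then μ else 0) = 0)
    (hsrc : u k + μ = 0) : μ = 0 ∧ ∀ j ≤ d + 2, u j = 0 := by
  have hleft : ∀ i, 0 ≤ i → i + 2 ≤ k → u i + u (i + 1) + u (i + 2) = 0 :=
    fun i _ hi => by simpa [show i + 1 ≠ k by omega] using hrow i (by omega)
  have hright : ∀ i, k ≤ i → i + 2 ≤ d + 2 → u i + u (i + 1) + u (i + 2) = 0 :=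
    fun i hi _ => by simpa [show i + 1 ≠ k by omega] using hrow i (by omega)
  have hcenter : u (k - 1) + u (k + 1) = 0 := by
    have := hrow (k - 1) (by omega)
    rw [if_pos (by omega), show k - 1 + 1 = k by omega, show k - 1 + 2 = k + 1 by omega] at this
    linarith
  have huk : u k = 0 := by
    rcases (show k % 3 = 1 ∨ k % 3 = 2 by omega) with hk1 | hk2
    · have h₁ : u (k - 1) = 0 := by
        rw [eq_of_mod_three_eq hleft le_rfl (Nat.zero_le _) (by omega) (by omega), h₀]
      have h₂ : u (k + 2) = 0 := by
        rw [← eq_of_mod_three_eq hright (by omega) (by omega) le_rfl (by omega), hend]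
      linarith [hright k le_rfl (by omega)]
    · have h₁ : u (k + 1) = 0 := by
        rw [← eq_of_mod_three_eq hright (by omega) (by omega) le_rfl (by omega), hend]
      have h₂ : u (k - 2) = 0 := by
        rw [eq_of_mod_three_eq hleft le_rfl (Nat.zero_le _) (by omega) (by omega), h₀]
      have := hleft (k - 2) (Nat.zero_le _) (by omega)
      rw [show k - 2 + 1 = k - 1 by omega, show k - 2 + 2 = k by omega] at this
      linarith
  have hμ : μ = 0 := by linarith
  have hall : ∀ i, 0 ≤ i → i + 2 ≤ d + 2 → u i + u (i + 1) + u (i + 2) = 0 :=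
    fun i _ hi => by simpa [hμ] using hrow i (by omega)
  have hu₁ : u 1 = 0 := by
    rcases (show k % 3 = 1 ∨ k % 3 = 2 by omega) with hk1 | hk2
    · rw [← eq_of_mod_three_eq hall (by omega) hk₁ (by omega) (by omega), huk]
    · have h₂ : u 2 = 0 := by
        rw [← eq_of_mod_three_eq (j := k) hall (by omega) (by omega) (by omega) (by omega), huk]
      linarith [hall 0 le_rfl (by omega)]
  exact ⟨hμ, fun j hj => eq_zero_of_eq_zero_of_eq_zero hall h₀ hu₁ (Nat.zero_le j) hj⟩

lemma eq_zero_at_two_sources {d a b : ℕ} {μ ν : ℝ} (hd : d % 3 = 1) (hab : a ≤ b)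
    (hb : 3 * b ≤ d + 1) (h₀ : u 0 = 0) (h₁ : u 1 = 0) (hend : u (d + 2) = 0)
    (hrow : ∀ i ≤ d, u i + u (i + 1) + u (i + 2)
      + ((if i + 1 = 3 * a then μ else 0) + (if i + 1 = 3 * b then ν else 0)) = 0) :
    u (3 * a) = 0 ∧ u (3 * b) = 0 := by
  have hleft : ∀ i, 0 ≤ i → i + 2 ≤ 3 * a → u i + u (i + 1) + u (i + 2) = 0 :=
    fun i _ hi => by
      simpa [show i + 1 ≠ 3 * a by omega, show i + 1 ≠ 3 * b by omega] using hrow i (by omega)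
  have hright : ∀ i, 3 * b ≤ i → i + 2 ≤ d + 2 → u i + u (i + 1) + u (i + 2) = 0 :=
    fun i hi _ => by
      simpa [show i + 1 ≠ 3 * a by omega, show i + 1 ≠ 3 * b by omega] using hrow i (by omega)
  refine ⟨eq_zero_of_eq_zero_of_eq_zero hleft h₀ h₁ (Nat.zero_le _) le_rfl, ?_⟩
  rw [← hend, eq_of_mod_three_eq hright le_rfl (by omega) le_rfl (by omega)]

end ThreeTerm

namespace SimpleGraph

variable {V : Type*} {G : SimpleGraph V} {d : ℕ} {v : ℕ → V}

lemma adjMatrix_add_one_apply_s18 (a u : V) :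
    (G.adjMatrix ℝ + 1) a u = if u = a ∨ G.Adj a u then 1 else 0 := by
  by_cases h : u = a
  · subst h; simp
  · simp [Ne.symm h, h]

variable (G) in
def IsGeodesicSeq (d : ℕ) (v : ℕ → V) : Prop :=
  ∀ i ∈ Icc 1 (d + 1), ∀ j ∈ Icc 1 (d + 1), G.dist (v i) (v j) = max i j - min i j

noncomputable def pathCoeff (d : ℕ) (v : ℕ → V) (f : V → ℝ) (j : ℕ) : ℝ :=
  if j ∈ Icc 1 (d + 1) then f (v j) else 0

lemma pathCoeff_zero (f : V → ℝ) : pathCoeff d v f 0 = 0 := by simp [pathCoeff]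

lemma pathCoeff_end (f : V → ℝ) : pathCoeff d v f (d + 2) = 0 := by simp [pathCoeff]

lemma sum_Icc_ite_eq_pathCoeff (f : V → ℝ) (i : ℕ) :
    ∑ j ∈ Icc 1 (d + 1), (if i ≤ j ∧ j ≤ i + 2 then f (v j) else 0)
      = pathCoeff d v f i + pathCoeff d v f (i + 1) + pathCoeff d v f (i + 2) := by
  have hIcc : Icc i (i + 2) = {i, i + 1, i + 2} := by ext; simp; omega
  rw [← sum_filter, show (Icc 1 (d + 1)).filter (fun j => i ≤ j ∧ j ≤ i + 2)
      = (Icc i (i + 2)).filter (· ∈ Icc 1 (d + 1)) by ext; simp; omega,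
    sum_filter, hIcc, sum_insert (by simp), sum_insert (by simp), sum_singleton, ← add_assoc]
  rfl

lemma IsGeodesicSeq.injOn (hpath : G.IsGeodesicSeq d v) : Set.InjOn v (Icc 1 (d + 1)) := by
  intro i hi j hj h
  have := hpath i hi j hj
  rw [h, dist_self] at this
  omega

lemma IsGeodesicSeq.closedNbhd_iff (hpath : G.IsGeodesicSeq d v) {i j : ℕ}
    (hi : i ∈ Icc 1 (d + 1)) (hj : j ∈ Icc 1 (d + 1)) :
    (v j = v i ∨ G.Adj (v i) (v j)) ↔ (i ≤ j + 1 ∧ j ≤ i + 1) := by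
  rw [← dist_eq_one_iff_adj, hpath i hi j hj, hpath.injOn.eq_iff hj hi]
  omega

lemma adj_iff_of_pathNbrs_eq_singleton {x : V} {k j : ℕ} (hx : pathNbrs G d v x = {k})
    (hj : j ∈ Icc 1 (d + 1)) : G.Adj x (v j) ↔ j = k := by
  simpa [pathNbrs, hj] using congrArg (j ∈ ·) hx

lemma mem_Icc_of_pathNbrs_eq_singleton {x : V} {k : ℕ} (hx : pathNbrs G d v x = {k}) :
    k ∈ Icc 1 (d + 1) :=
  (mem_filter.1 (hx ▸ mem_singleton_self k)).1

lemma adjMatrix_add_one_apply_path_of_pathNbrs {z : V} (hzP : ∀ i ∈ Icc 1 (d + 1), z ≠ v i)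
    {k j : ℕ} (hz : pathNbrs G d v z = {k}) (hj : j ∈ Icc 1 (d + 1)) :
    (G.adjMatrix ℝ + 1) (v j) z = if j = k then 1 else 0 := by
  rw [adjMatrix_add_one_apply_s18, G.adj_comm, adj_iff_of_pathNbrs_eq_singleton hz hj]
  simp [hzP j hj]

lemma forall_ne_path_of_mem_pair {z z' : V} (hzP : ∀ i ∈ Icc 1 (d + 1), z ≠ v i)
    (hz'P : ∀ i ∈ Icc 1 (d + 1), z' ≠ v i) :
    ∀ x ∈ ({z, z'} : Finset V), ∀ j ∈ Icc 1 (d + 1), x ≠ v j := by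
  simp only [mem_insert, mem_singleton]
  rintro x (rfl | rfl)
  exacts [hzP, hz'P]

lemma le_add_one_of_adj_of_pathNbrs_eq_singleton (hpath : G.IsGeodesicSeq d v) {z z' : V}
    {a b : ℕ} (hz : pathNbrs G d v z = {3 * a}) (hz' : pathNbrs G d v z' = {3 * b})
    (hadj : G.Adj z z') : a ≤ b + 1 := by
  have ha := mem_Icc_of_pathNbrs_eq_singleton hz
  have hb := mem_Icc_of_pathNbrs_eq_singleton hz'
  have hza := (adj_iff_of_pathNbrs_eq_singleton hz ha).2 rfl
  have hz'b := (adj_iff_of_pathNbrs_eq_singleton hz' hb).2 rfl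
  have := dist_le (.cons hza.symm (.cons hadj (.cons hz'b .nil)))
  rw [hpath _ ha _ hb] at this
  simp only [Walk.length_cons, Walk.length_nil] at this
  omega

lemma eq_zero_of_pathCoeff_eq_zero {X : Finset V} {f : V → ℝ}
    (hsupp : ∀ u ∉ X ∪ (Icc 1 (d + 1)).image v, f u = 0)
    (hc : ∀ j ∈ Icc 1 (d + 1), pathCoeff d v f j = 0) {u : V} (hu : u ∉ X) : f u = 0 := by
  by_cases hP : u ∈ (Icc 1 (d + 1)).image v
  · obtain ⟨j, hj, rfl⟩ := mem_image.1 hP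
    simpa [pathCoeff, hj] using hc j hj
  · exact hsupp u (by simp_all)

variable [Fintype V]

/-- `Fintype.card V - multNegOne G` is the rank of `A + I`. -/
lemma exists_ne_zero_mulVec_eq_zero_of_support (W : Finset V)
    (hW : Fintype.card V < multNegOne G + #W) :
    ∃ f : V → ℝ, f ≠ 0 ∧ (G.adjMatrix ℝ + 1) *ᵥ f = 0 ∧ ∀ u ∉ W, f u = 0 := by
  let E := Function.ExtendByZero.linearMap ℝ ((↑) : W → V)
  have hE : Function.Injective E := fun g g' h => funext fun w => by
    simpa [E, Subtype.val_injective.extend_apply] using congrFun h w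
  have hnot : ¬ Disjoint (LinearMap.ker (toLin' (G.adjMatrix ℝ + 1))) (LinearMap.range E) := by
    intro hdisj
    have := Submodule.finrank_add_finrank_le_of_disjoint hdisj
    rw [LinearMap.finrank_range_of_inj hE, Module.finrank_fintype_fun_eq_card,
      Module.finrank_fintype_fun_eq_card, Fintype.card_coe] at this
    exact absurd this (by unfold multNegOne at hW; omega)
  obtain ⟨f, hker, ⟨g, rfl⟩, hf0⟩ : ∃ f ∈ LinearMap.ker (toLin' (G.adjMatrix ℝ + 1)),
      f ∈ LinearMap.range E ∧ f ≠ 0 := by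
    simpa [Submodule.disjoint_def] using hnot
  exact ⟨E g, hf0, hker, fun u hu => Function.extend_apply' _ _ _ (by simpa using hu)⟩

lemma eq_of_mulVec_eq_zero
    (hcanon : ∀ a b : V, (∀ z : V, (z = a ∨ G.Adj a z) ↔ (z = b ∨ G.Adj b z)) → a = b)
    {f : V → ℝ} (hf : (G.adjMatrix ℝ + 1) *ᵥ f = 0) {z z' : V}
    (hsupp : ∀ u, u ≠ z → u ≠ z' → f u = 0) (hz : f z ≠ 0) (hz' : f z' = -f z) :
    z = z' := by
  by_contra hne
  refine hne (hcanon z z' fun w => ?_)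
  have hrow := congrFun hf w
  rw [mulVec, dotProduct, Fintype.sum_eq_add z z' hne fun u hu => by
    rw [hsupp u hu.1 hu.2, mul_zero], hz', Pi.zero_apply, mul_neg, ← sub_eq_add_neg,
    ← sub_mul, mul_eq_zero, or_iff_left hz, sub_eq_zero, adjMatrix_add_one_apply_s18,
    adjMatrix_add_one_apply_s18] at hrow
  simp only [G.adj_comm w, eq_comm (a := z), eq_comm (a := z')] at hrow
  by_cases h : w = z ∨ G.Adj z w <;> by_cases h' : w = z' ∨ G.Adj z' w <;> simp_all

lemma sum_eq_sum_add_sum_path (hinj : Set.InjOn v (Icc 1 (d + 1))) {X : Finset V}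
    (hX : ∀ x ∈ X, ∀ j ∈ Icc 1 (d + 1), x ≠ v j) {g : V → ℝ}
    (hg : ∀ u ∉ X ∪ (Icc 1 (d + 1)).image v, g u = 0) :
    ∑ u, g u = ∑ x ∈ X, g x + ∑ j ∈ Icc 1 (d + 1), g (v j) := by
  have hdisj : Disjoint X ((Icc 1 (d + 1)).image v) := Finset.disjoint_left.2 fun x hx hx' => by
    obtain ⟨j, hj, rfl⟩ := mem_image.1 hx'
    exact hX _ hx j hj rfl
  rw [← sum_image hinj, ← sum_union hdisj, sum_subset (subset_univ _) fun u _ hu => hg u hu]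

lemma pathCoeff_add_add_add_eq_zero (hpath : G.IsGeodesicSeq d v) {X : Finset V}
    (hX : ∀ x ∈ X, ∀ j ∈ Icc 1 (d + 1), x ≠ v j) {f : V → ℝ}
    (hf : (G.adjMatrix ℝ + 1) *ᵥ f = 0)
    (hsupp : ∀ u ∉ X ∪ (Icc 1 (d + 1)).image v, f u = 0)
    {i : ℕ} (hi : i ≤ d) :
    pathCoeff d v f i + pathCoeff d v f (i + 1) + pathCoeff d v f (i + 2)
      + ∑ x ∈ X, (G.adjMatrix ℝ + 1) (v (i + 1)) x * f x = 0 := by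
  have hrow := congrFun hf (v (i + 1))
  rw [mulVec, dotProduct, sum_eq_sum_add_sum_path hpath.injOn hX fun u hu => by
    rw [hsupp u hu, mul_zero], Pi.zero_apply] at hrow
  have hpathSum : ∑ j ∈ Icc 1 (d + 1), (G.adjMatrix ℝ + 1) (v (i + 1)) (v j) * f (v j)
      = pathCoeff d v f i + pathCoeff d v f (i + 1) + pathCoeff d v f (i + 2) := by
    rw [← sum_Icc_ite_eq_pathCoeff]
    refine sum_congr rfl fun j hj => ?_
    simp only [adjMatrix_add_one_apply_s18, hpath.closedNbhd_iff (i := i + 1) (by simp; omega) hj]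
    split_ifs <;> first | (exfalso; omega) | simp
  linarith

lemma sum_add_pathCoeff_eq_zero (hpath : G.IsGeodesicSeq d v) {X : Finset V}
    (hX : ∀ x ∈ X, ∀ j ∈ Icc 1 (d + 1), x ≠ v j) {f : V → ℝ}
    (hf : (G.adjMatrix ℝ + 1) *ᵥ f = 0)
    (hsupp : ∀ u ∉ X ∪ (Icc 1 (d + 1)).image v, f u = 0)
    {x : V} (hx : x ∈ X) {k : ℕ} (hk : pathNbrs G d v x = {k}) :
    ∑ y ∈ X, (G.adjMatrix ℝ + 1) x y * f y + pathCoeff d v f k = 0 := by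
  have hrow := congrFun hf x
  rw [mulVec, dotProduct, sum_eq_sum_add_sum_path hpath.injOn hX fun u hu => by
    rw [hsupp u hu, mul_zero], Pi.zero_apply] at hrow
  have hkIcc := mem_Icc_of_pathNbrs_eq_singleton hk
  have hpathSum :
      ∑ j ∈ Icc 1 (d + 1), (G.adjMatrix ℝ + 1) x (v j) * f (v j) = pathCoeff d v f k := by
    rw [pathCoeff, if_pos hkIcc]
    calc _ = ∑ j ∈ Icc 1 (d + 1), if j = k then f (v j) else 0 := sum_congr rfl fun j hj => by
          rw [adjMatrix_add_one_apply_s18]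
          simp [adj_iff_of_pathNbrs_eq_singleton hk hj, (hX x hx j hj).symm]
      _ = f (v k) := by rw [sum_ite_eq', if_pos hkIcc]
  linarith

theorem mod_three_eq_zero_of_pathNbrs_eq_singleton (hd : d % 3 = 1)
    (hpath : G.IsGeodesicSeq d v) (hmult : multNegOne G = Fintype.card V - d - 1) {z : V}
    (hzP : ∀ i ∈ Icc 1 (d + 1), z ≠ v i) {k : ℕ} (hz : pathNbrs G d v z = {k}) :
    k % 3 = 0 := by
  by_contra hk
  have hX : ∀ x ∈ ({z} : Finset V), ∀ j ∈ Icc 1 (d + 1), x ≠ v j := by simpa using hzP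
  have hW : #({z} ∪ (Icc 1 (d + 1)).image v) = d + 2 := by
    rw [card_union_of_disjoint (by simpa [eq_comm] using hzP), card_singleton,
      card_image_of_injOn hpath.injOn, Nat.card_Icc]
    omega
  obtain ⟨f, hf0, hf, hsupp⟩ :=
    exists_ne_zero_mulVec_eq_zero_of_support (G := G) ({z} ∪ (Icc 1 (d + 1)).image v)
      (by have := card_le_univ ({z} ∪ (Icc 1 (d + 1)).image v); omega)
  have hkIcc := mem_Icc.1 (mem_Icc_of_pathNbrs_eq_singleton hz)
  obtain ⟨hμ, hc⟩ := eq_zero_of_pendant_source (u := pathCoeff d v f) (μ := f z) hd hkIcc.1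
    hkIcc.2 hk (pathCoeff_zero f) (pathCoeff_end f)
    (fun i hi => by
      have hrow := pathCoeff_add_add_add_eq_zero hpath hX hf hsupp hi
      rwa [sum_singleton, adjMatrix_add_one_apply_path_of_pathNbrs hzP hz (by simp; omega),
        ite_mul, one_mul, zero_mul] at hrow)
    (by simpa [adjMatrix_add_one_apply_s18, add_comm]
        using sum_add_pathCoeff_eq_zero hpath hX hf hsupp (mem_singleton_self z) hz)
  refine hf0 (funext fun u => ?_)
  by_cases hu : u = z
  · exact hu ▸ hμ
  · exact eq_zero_of_pathCoeff_eq_zero (X := {z}) hsupp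
      (fun j hj => hc j (by simp at hj; omega)) (by simpa using hu)

/-- The vertex `v 1` is left out so that the support has exactly `d + 2` elements. -/
lemma exists_kernel_vector_of_pair (hpath : G.IsGeodesicSeq d v)
    (hmult : multNegOne G = Fintype.card V - d - 1) {z z' : V} (hzz' : z ≠ z')
    (hzP : ∀ i ∈ Icc 1 (d + 1), z ≠ v i) (hz'P : ∀ i ∈ Icc 1 (d + 1), z' ≠ v i) :
    ∃ f : V → ℝ, f ≠ 0 ∧ (G.adjMatrix ℝ + 1) *ᵥ f = 0 ∧
      (∀ u ∉ {z, z'} ∪ (Icc 1 (d + 1)).image v, f u = 0) ∧ pathCoeff d v f 1 = 0 := by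
  set W : Finset V := {z, z'} ∪ (Icc 2 (d + 1)).image v
  have hv₁ : v 1 ∉ W := by
    simp only [W, mem_union, mem_insert, mem_singleton, mem_image, mem_Icc, not_or, not_exists]
    refine ⟨⟨(hzP 1 (by simp)).symm, (hz'P 1 (by simp)).symm⟩, fun j ⟨hj, hvj⟩ => ?_⟩
    have := hpath.injOn (by simp; omega) (by simp) hvj
    omega
  have hW : #W = d + 2 := by
    rw [card_union_of_disjoint, card_pair hzz', card_image_of_injOn
      (hpath.injOn.mono (coe_subset.2 (Icc_subset_Icc_left (by norm_num)))), Nat.card_Icc]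
    · omega
    · refine Finset.disjoint_left.2 fun x hx hx' => ?_
      obtain ⟨j, hj, rfl⟩ := mem_image.1 hx'
      exact forall_ne_path_of_mem_pair hzP hz'P _ hx j (Icc_subset_Icc_left (by norm_num) hj) rfl
  obtain ⟨f, hf0, hf, hsupp⟩ :=
    exists_ne_zero_mulVec_eq_zero_of_support (G := G) W (by have := card_le_univ W; omega)
  refine ⟨f, hf0, hf, fun u hu => hsupp u fun h => hu ?_, by simp [pathCoeff, hsupp _ hv₁]⟩
  exact union_subset_union le_rfl (image_subset_image (Icc_subset_Icc_left (by norm_num))) h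

lemma rows_of_pair (hpath : G.IsGeodesicSeq d v) {z z' : V} (hzz' : z ≠ z')
    (hzP : ∀ i ∈ Icc 1 (d + 1), z ≠ v i) (hz'P : ∀ i ∈ Icc 1 (d + 1), z' ≠ v i)
    {a b : ℕ}
    (hz : pathNbrs G d v z = {3 * a}) (hz' : pathNbrs G d v z' = {3 * b}) {f : V → ℝ}
    (hf : (G.adjMatrix ℝ + 1) *ᵥ f = 0)
    (hsupp : ∀ u ∉ {z, z'} ∪ (Icc 1 (d + 1)).image v, f u = 0) :
    (∀ i ≤ d, pathCoeff d v f i + pathCoeff d v f (i + 1) + pathCoeff d v f (i + 2)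
      + ((if i + 1 = 3 * a then f z else 0) + (if i + 1 = 3 * b then f z' else 0)) = 0) ∧
    f z + (G.adjMatrix ℝ + 1) z z' * f z' + pathCoeff d v f (3 * a) = 0 ∧
    (G.adjMatrix ℝ + 1) z z' * f z + f z' + pathCoeff d v f (3 * b) = 0 := by
  have hX := forall_ne_path_of_mem_pair hzP hz'P
  have hdiag : ∀ x : V, (G.adjMatrix ℝ + 1) x x = 1 := by simp
  have hsymm : (G.adjMatrix ℝ + 1) z' z = (G.adjMatrix ℝ + 1) z z' := by
    rw [adjMatrix_add_one_apply_s18, adjMatrix_add_one_apply_s18, G.adj_comm]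
    simp [hzz', hzz'.symm]
  refine ⟨fun i hi => ?_, ?_, ?_⟩
  · have hrow := pathCoeff_add_add_add_eq_zero hpath hX hf hsupp hi
    have ha := mem_Icc_of_pathNbrs_eq_singleton hz
    rwa [sum_pair hzz', adjMatrix_add_one_apply_path_of_pathNbrs hzP hz (by simp; omega),
      adjMatrix_add_one_apply_path_of_pathNbrs hz'P hz' (by simp; omega), ite_mul, one_mul,
      zero_mul, ite_mul, one_mul, zero_mul] at hrow
  · have hrow := sum_add_pathCoeff_eq_zero hpath hX hf hsupp (by simp) hz
    rwa [sum_pair hzz', hdiag, one_mul] at hrow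
  · have hrow := sum_add_pathCoeff_eq_zero hpath hX hf hsupp (by simp) hz'
    rwa [sum_pair hzz', hdiag, one_mul, hsymm] at hrow

theorem ne_and_adj_of_pathNbrs_eq_singleton_of_le (hd : d % 3 = 1)
    (hpath : G.IsGeodesicSeq d v) (hmult : multNegOne G = Fintype.card V - d - 1)
    (hcanon : ∀ a b : V, (∀ z : V, (z = a ∨ G.Adj a z) ↔ (z = b ∨ G.Adj b z)) → a = b)
    {z z' : V} (hzz' : z ≠ z') (hzP : ∀ i ∈ Icc 1 (d + 1), z ≠ v i)
    (hz'P : ∀ i ∈ Icc 1 (d + 1), z' ≠ v i) {a b : ℕ} (hab : a ≤ b)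
    (hz : pathNbrs G d v z = {3 * a}) (hz' : pathNbrs G d v z' = {3 * b}) :
    a ≠ b ∧ G.Adj z z' := by
  have hb := mem_Icc.1 (mem_Icc_of_pathNbrs_eq_singleton hz')
  obtain ⟨f, hf0, hf, hsupp, hc₁⟩ := exists_kernel_vector_of_pair hpath hmult hzz' hzP hz'P
  obtain ⟨hrow, hzrow, hz'row⟩ := rows_of_pair hpath hzz' hzP hz'P hz hz' hf hsupp
  obtain ⟨hc3a, hc3b⟩ := eq_zero_at_two_sources hd hab (by omega) (pathCoeff_zero f)
    hc₁ (pathCoeff_end f) hrow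
  rw [hc3a, add_zero] at hzrow
  rw [hc3b, add_zero] at hz'row
  have hvanish : (∀ i ≤ d, (if i + 1 = 3 * a then f z else 0)
      + (if i + 1 = 3 * b then f z' else 0) = 0) → ∀ u, u ≠ z → u ≠ z' → f u = 0 :=
    fun h u hu hu' => eq_zero_of_pathCoeff_eq_zero (X := {z, z'}) hsupp (fun j hj =>
      eq_zero_of_eq_zero_of_eq_zero (p := 0) (q := d + 2)
        (fun i _ hi => by linarith [hrow i (by omega), h i (by omega)])
        (pathCoeff_zero f) hc₁ (Nat.zero_le _) (by simp at hj; omega)) (by simp [hu, hu'])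
  have hf_ne : f z = 0 → f z' = 0 → (∀ u, u ≠ z → u ≠ z' → f u = 0) → False :=
    fun hz0 hz'0 hrest => hf0 (funext fun u => by
      by_cases hu : u = z
      · rwa [hu]
      by_cases hu' : u = z'
      · rwa [hu']
      exact hrest u hu hu')
  refine ⟨fun hab' => ?_, ?_⟩
  · subst hab'
    have hε : 0 ≤ (G.adjMatrix ℝ + 1) z z' := by
      rw [adjMatrix_add_one_apply_s18]; split_ifs <;> norm_num
    have hsum : f z' = -f z := by nlinarith
    have hrest := hvanish fun i _ => by split_ifs <;> linarith
    refine hzz' (eq_of_mulVec_eq_zero hcanon hf hrest (fun hz0 => hf_ne hz0 ?_ hrest) hsum)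
    rw [hsum, hz0, neg_zero]
  · by_contra hadj
    have hε : (G.adjMatrix ℝ + 1) z z' = 0 := by
      rw [adjMatrix_add_one_apply_s18]
      simp [hadj, hzz'.symm]
    rw [hε, zero_mul, add_zero] at hzrow
    rw [hε, zero_mul, zero_add] at hz'row
    exact hf_ne hzrow hz'row (hvanish fun i _ => by simp [hzrow, hz'row])

theorem ne_and_adj_of_pathNbrs_eq_singleton (hd : d % 3 = 1) (hpath : G.IsGeodesicSeq d v)
    (hmult : multNegOne G = Fintype.card V - d - 1)
    (hcanon : ∀ a b : V, (∀ z : V, (z = a ∨ G.Adj a z) ↔ (z = b ∨ G.Adj b z)) → a = b)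
    {z z' : V} (hzz' : z ≠ z') (hzP : ∀ i ∈ Icc 1 (d + 1), z ≠ v i)
    (hz'P : ∀ i ∈ Icc 1 (d + 1), z' ≠ v i) {a b : ℕ}
    (hz : pathNbrs G d v z = {3 * a}) (hz' : pathNbrs G d v z' = {3 * b}) :
    a ≠ b ∧ G.Adj z z' ∧ a ≤ b + 1 ∧ b ≤ a + 1 := by
  obtain ⟨hab, hadj⟩ : a ≠ b ∧ G.Adj z z' := by
    rcases le_total a b with hab | hba
    · exact ne_and_adj_of_pathNbrs_eq_singleton_of_le hd hpath hmult hcanon hzz' hzP hz'P hab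
        hz hz'
    · obtain ⟨hba, hadj⟩ := ne_and_adj_of_pathNbrs_eq_singleton_of_le hd hpath hmult hcanon
        hzz'.symm hz'P hzP hba hz' hz
      exact ⟨hba.symm, hadj.symm⟩
  exact ⟨hab, hadj, le_add_one_of_adj_of_pathNbrs_eq_singleton hpath hz hz' hadj,
    le_add_one_of_adj_of_pathNbrs_eq_singleton hpath hz' hz hadj.symm⟩

lemma exists_pathNbrs_eq_singleton_three_mul (hd : d % 3 = 1) (hpath : G.IsGeodesicSeq d v)
    (hmult : multNegOne G = Fintype.card V - d - 1) {z : V}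
    (hzP : ∀ i ∈ Icc 1 (d + 1), z ≠ v i) (hz : #(pathNbrs G d v z) = 1) :
    ∃ c, pathNbrs G d v z = {3 * c} := by
  obtain ⟨k, hk⟩ := card_eq_one.1 hz
  have := mod_three_eq_zero_of_pathNbrs_eq_singleton hd hpath hmult hzP hk
  exact ⟨k / 3, by rw [hk]; congr; omega⟩

theorem ncard_pathNbrs_card_eq_one_le_two (hd : d % 3 = 1) (hpath : G.IsGeodesicSeq d v)
    (hmult : multNegOne G = Fintype.card V - d - 1)
    (hcanon : ∀ a b : V, (∀ z : V, (z = a ∨ G.Adj a z) ↔ (z = b ∨ G.Adj b z)) → a = b) :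
    {z : V | (∀ i ∈ Icc 1 (d + 1), z ≠ v i) ∧ #(pathNbrs G d v z) = 1}.ncard ≤ 2 := by
  by_contra hS
  obtain ⟨z₁, z₂, z₃, ⟨h₁P, h₁⟩, ⟨h₂P, h₂⟩, ⟨h₃P, h₃⟩, h₁₂, h₁₃, h₂₃⟩ :=
    (Set.two_lt_ncard_iff (Set.toFinite _)).1 (not_le.1 hS)
  obtain ⟨c₁, hc₁⟩ := exists_pathNbrs_eq_singleton_three_mul hd hpath hmult h₁P h₁
  obtain ⟨c₂, hc₂⟩ := exists_pathNbrs_eq_singleton_three_mul hd hpath hmult h₂P h₂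
  obtain ⟨c₃, hc₃⟩ := exists_pathNbrs_eq_singleton_three_mul hd hpath hmult h₃P h₃
  have := ne_and_adj_of_pathNbrs_eq_singleton hd hpath hmult hcanon h₁₂ h₁P h₂P hc₁ hc₂
  have := ne_and_adj_of_pathNbrs_eq_singleton hd hpath hmult hcanon h₁₃ h₁P h₃P hc₁ hc₃
  have := ne_and_adj_of_pathNbrs_eq_singleton hd hpath hmult hcanon h₂₃ h₂P h₃P hc₂ hc₃
  omega

end SimpleGraph

theorem stmt_18_general {V : Type*} [Fintype V] (G : SimpleGraph V) (n d : ℕ)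
    (hcard : Fintype.card V = n)
    (hcanon : ∀ a b : V, (∀ z : V, (z = a ∨ G.Adj a z) ↔ (z = b ∨ G.Adj b z)) → a = b)
    (hd3 : d % 3 = 1)
    (v : ℕ → V)
    (hpath : ∀ i ∈ Finset.Icc 1 (d + 1), ∀ j ∈ Finset.Icc 1 (d + 1),
      G.dist (v i) (v j) = max i j - min i j)
    (hmult : multNegOne G = n - d - 1)
    (x y : V) (hxy : x ≠ y) (hxP : ∀ i ∈ Finset.Icc 1 (d + 1), x ≠ v i) (hyP : ∀ i ∈ Finset.Icc 1 (d + 1), y ≠ v i) (a b : ℕ)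
    (hx : pathNbrs G d v x = {3 * a}) (hy : pathNbrs G d v y = {3 * b}) :
    a ≠ b ∧ G.Adj x y ∧
    {z : V | (∀ i ∈ Finset.Icc 1 (d + 1), z ≠ v i) ∧
      (pathNbrs G d v z).card = 1}.ncard ≤ 2 := by
  subst hcard
  obtain ⟨hab, hadj, -⟩ :=
    SimpleGraph.ne_and_adj_of_pathNbrs_eq_singleton hd3 hpath hmult hcanon hxy hxP hyP hx hy
  exact ⟨hab, hadj, SimpleGraph.ncard_pathNbrs_card_eq_one_le_two hd3 hpath hmult hcanon⟩

theorem stmt_18 {V : Type*} [Fintype V] (G : SimpleGraph V) (n d : ℕ)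
    (hconn : G.Connected)
    (hcard : Fintype.card V = n)
    (hcanon : ∀ a b : V, (∀ z : V, (z = a ∨ G.Adj a z) ↔ (z = b ∨ G.Adj b z)) → a = b)
    (hd3 : d % 3 = 1)
    (hdiam : ∀ a b : V, G.dist a b ≤ d)
    (v : ℕ → V)
    (hpath : ∀ i ∈ Finset.Icc 1 (d + 1), ∀ j ∈ Finset.Icc 1 (d + 1),
      G.dist (v i) (v j) = max i j - min i j)
    (hmult : multNegOne G = n - d - 1)
    (x y : V) (hxy : x ≠ y) (hxP : ∀ i ∈ Finset.Icc 1 (d + 1), x ≠ v i) (hyP : ∀ i ∈ Finset.Icc 1 (d + 1), y ≠ v i) (a b : ℕ)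
    (hx : pathNbrs G d v x = {3 * a}) (hy : pathNbrs G d v y = {3 * b}) :
    a ≠ b ∧ G.Adj x y ∧
    {z : V | (∀ i ∈ Finset.Icc 1 (d + 1), z ≠ v i) ∧
      (pathNbrs G d v z).card = 1}.ncard ≤ 2 :=
  stmt_18_general G n d hcard hcanon hd3 v hpath hmult x y hxy hxP hyP a b hx hy
end
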